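/- Let Ω be a nonzero positive semidefinite stress matrix of framework (G,p). Then the Cayley configuration spectrahedron F of (G,p) is contained in the subspace { y ∈ R^{m̄} : Ω (Σ_{{i,j} missing} y_ij E^{ij}) = 0 }. -/

import Mathlib

/-!
With `K = V Vᵀ = I - J / n` the projection onto `e^⊥`, a point `y` of the spectrahedron gives the
PSD matrix `Y = V (X + Σ y M) Vᵀ = K (P Pᵀ - ½ S) K`, where `S = Σ y_ij E^{ij}`. Since `Ω K = Ω` and
`Ω P = 0`, we get `Ω Y = -½ Ω S K`, whose trace is `-½ tr (Ω S) = 0` because `Ω` vanishes on the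
missing edges, where `S` lives. Two PSD matrices whose product has trace zero multiply to zero, so
`Ω S K = 0`: each row of `Ω S` is constant, and as its diagonal vanishes, `Ω S = 0`.
-/

open Matrix BigOperators

/-- `E^{ij}`: the symmetric matrix with 1's in entries `(i,j)` and `(j,i)`, 0 elsewhere. -/
def Eij {n : ℕ} (i j : Fin n) : Matrix (Fin n) (Fin n) ℝ :=
  Matrix.single i j 1 + Matrix.single j i 1

open scoped ComplexOrder

namespace Matrix

open scoped MatrixOrder in
theorem PosSemidef.mul_eq_zero_of_trace_mul_eq_zero {𝕜 ι : Type*} [RCLike 𝕜] [Fintype ι]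
    {A B : Matrix ι ι 𝕜} (hA : A.PosSemidef) (hB : B.PosSemidef) (h : (A * B).trace = 0) :
    A * B = 0 := by
  classical
  obtain ⟨C, rfl⟩ := CStarAlgebra.nonneg_iff_eq_star_mul_self.mp hA.nonneg
  obtain ⟨D, rfl⟩ := CStarAlgebra.nonneg_iff_eq_star_mul_self.mp hB.nonneg
  have hCD : C * Dᴴ = 0 := by
    rw [← trace_mul_conjTranspose_self_eq_zero_iff, conjTranspose_mul, conjTranspose_conjTranspose,
      ← mul_assoc, trace_mul_comm, ← h]
    simp only [star_eq_conjTranspose, mul_assoc]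
  simp only [star_eq_conjTranspose]
  rw [mul_assoc, ← mul_assoc C, hCD, zero_mul, mul_zero]

section Centering

variable (ι : Type*) [Fintype ι] [DecidableEq ι]

noncomputable def centering : Matrix ι ι ℝ :=
  1 - (Fintype.card ι : ℝ)⁻¹ • of fun _ _ => 1

variable {ι}

theorem mul_centering_of_mulVec_one_eq_zero {A : Matrix ι ι ℝ} (hA : A *ᵥ (fun _ => 1) = 0) :
    A * centering ι = A := by
  have hAJ : A * of (fun _ _ => 1) = 0 := by
    ext i j
    simpa [mul_apply, mulVec, dotProduct] using congrFun hA i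
  rw [centering, mul_sub, mul_one, Matrix.mul_smul, hAJ, smul_zero, sub_zero]

theorem eq_zero_of_mul_centering_eq_zero {T : Matrix ι ι ℝ} (hT : T * centering ι = 0)
    (hdiag : ∀ k, T k k = 0) : T = 0 := by
  rw [centering, mul_sub, mul_one, Matrix.mul_smul, sub_eq_zero] at hT
  ext k l
  have hrow : ∀ l, T k l = (Fintype.card ι : ℝ)⁻¹ * ∑ m, T k m := by
    intro l
    simpa [mul_apply] using congrFun (congrFun hT k) l
  rw [zero_apply, hrow, ← hrow k, hdiag]

theorem mul_transpose_eq_centering {κ : Type*} [Fintype κ] [DecidableEq κ]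
    (hcard : Fintype.card κ + 1 = Fintype.card ι) {V : Matrix ι κ ℝ}
    (hVe : Vᵀ *ᵥ (fun _ => 1) = 0) (hVV : Vᵀ * V = 1) : V * Vᵀ = centering ι := by
  -- adjoining the unit column `c = e / √n` to `V` gives an orthogonal matrix
  set c : Matrix ι (Fin 1) ℝ := of fun _ _ => (√(Fintype.card ι))⁻¹
  have hsq : (√(Fintype.card ι : ℝ))⁻¹ * (√(Fintype.card ι))⁻¹ = (Fintype.card ι : ℝ)⁻¹ := by
    rw [← mul_inv, Real.mul_self_sqrt (Nat.cast_nonneg _)]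
  have hVc : Vᵀ * c = 0 := by
    ext i j
    have hcol : ∑ k, V k i = 0 := by simpa [mulVec, dotProduct] using congrFun hVe i
    simp [c, mul_apply, ← Finset.sum_mul, hcol]
  have hcc : cᵀ * c = 1 := by
    ext i j
    have hcard_pos : (Fintype.card ι : ℝ) ≠ 0 := by norm_cast; omega
    simp [c, mul_apply, hsq, Subsingleton.elim i j, hcard_pos, one_apply]
  have horth : fromRows Vᵀ cᵀ * fromCols V c = 1 := by
    rw [fromRows_mul_fromCols, hVV, hVc, hcc, ← transpose_transpose V, ← transpose_mul, hVc,
      transpose_zero, fromBlocks_one]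
  have e : ι ≃ κ ⊕ Fin 1 := Fintype.equivOfCardEq (by simp [hcard])
  have h := (fromCols_mul_fromRows_eq_one_comm e V c Vᵀ cᵀ).mpr horth
  rw [fromCols_mul_fromRows] at h
  have hcc' : c * cᵀ = (Fintype.card ι : ℝ)⁻¹ • of fun _ _ => 1 := by
    ext i j
    simp [c, mul_apply, hsq]
  rw [centering, ← h, hcc', add_sub_cancel_right]

end Centering

end Matrix

theorem conj_sub_half_smul_sum {ι κ Q : Type*} [Fintype ι] [Fintype Q] (V : Matrix ι κ ℝ)
    (B : Matrix ι ι ℝ) (E : Q → Matrix ι ι ℝ) (y : Q → ℝ) :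
    Vᵀ * (B - (1/2 : ℝ) • ∑ q, y q • E q) * V =
      Vᵀ * B * V + ∑ q, y q • ((-(1/2) : ℝ) • (Vᵀ * E q * V)) := by
  simp only [Matrix.mul_sub, Matrix.sub_mul, Matrix.mul_smul, Matrix.smul_mul, Matrix.mul_sum,
    Matrix.sum_mul, Finset.smul_sum, smul_smul]
  rw [sub_eq_add_neg, ← Finset.sum_neg_distrib]
  congr 1
  refine Finset.sum_congr rfl fun q _ => ?_
  rw [← neg_smul, mul_neg, mul_comm]

theorem mul_Eij_apply_self_eq_zero {n : ℕ} {Ω : Matrix (Fin n) (Fin n) ℝ} {a b : Fin n}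
    (hab : Ω a b = 0) (hba : Ω b a = 0) (k : Fin n) : (Ω * Eij a b) k k = 0 := by
  simp only [Eij, mul_apply, Matrix.add_apply, single_apply, mul_add, Finset.sum_add_distrib,
    ite_and, mul_ite, mul_zero, Finset.sum_ite_eq, Finset.mem_univ, if_true]
  split_ifs <;> simp_all

theorem mul_sum_smul_Eij_apply_self_eq_zero {n : ℕ} {Q : Type*} [Fintype Q]
    {Ω : Matrix (Fin n) (Fin n) ℝ} {a b : Q → Fin n}
    (hab : ∀ q, Ω (a q) (b q) = 0) (hba : ∀ q, Ω (b q) (a q) = 0) (y : Q → ℝ) (k : Fin n) :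
    (Ω * ∑ q, y q • Eij (a q) (b q)) k k = 0 := by
  rw [Matrix.mul_sum, Matrix.sum_apply]
  refine Finset.sum_eq_zero fun q _ => ?_
  rw [Matrix.mul_smul, Matrix.smul_apply, mul_Eij_apply_self_eq_zero (hab q) (hba q), smul_zero]

theorem stmt18_general (n r : ℕ) (G : SimpleGraph (Fin n)) [DecidableRel G.Adj]
    (P : Matrix (Fin n) (Fin r) ℝ)
    (V : Matrix (Fin n) (Fin (n - 1)) ℝ)
    (hVe : Vᵀ *ᵥ (fun _ => (1 : ℝ)) = 0) (hVV : Vᵀ * V = 1)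
    (X : Matrix (Fin (n - 1)) (Fin (n - 1)) ℝ) (hX : X = Vᵀ * P * Pᵀ * V)
    (M : {q : Fin n × Fin n // q.1 < q.2 ∧ ¬ G.Adj q.1 q.2} →
        Matrix (Fin (n - 1)) (Fin (n - 1)) ℝ)
    (hM : ∀ q, M q = (-(1/2) : ℝ) • (Vᵀ * Eij q.1.1 q.1.2 * V))
    (Ω : Matrix (Fin n) (Fin n) ℝ)
    (hΩP : Ω * P = 0) (hΩe : Ω *ᵥ (fun _ => (1 : ℝ)) = 0)
    (hΩmiss : ∀ i j, i ≠ j → ¬ G.Adj i j → Ω i j = 0)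
    (hΩpsd : Ω.PosSemidef) :
    {y : {q : Fin n × Fin n // q.1 < q.2 ∧ ¬ G.Adj q.1 q.2} → ℝ |
        (X + ∑ q, y q • M q).PosSemidef} ⊆
      {y | Ω * (∑ q, y q • Eij q.1.1 q.1.2) = 0} := by
  intro y hy
  set S := ∑ q, y q • Eij q.1.1 q.1.2
  show Ω * S = 0
  rcases Nat.eq_zero_or_pos n with rfl | hn
  · exact Subsingleton.elim _ _
  have hK : V * Vᵀ = centering (Fin n) := mul_transpose_eq_centering (by simp; omega) hVe hVV
  have hΩK : Ω * (V * Vᵀ) = Ω := hK ▸ mul_centering_of_mulVec_one_eq_zero hΩe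
  have hKΩ : V * Vᵀ * Ω = Ω := by
    have hΩsymm : Ωᵀ = Ω := by simpa using hΩpsd.isHermitian.eq
    simpa [hΩsymm, mul_assoc] using congrArg transpose hΩK
  set A := P * Pᵀ - (1/2 : ℝ) • S
  have hcayley : X + ∑ q, y q • M q = Vᵀ * A * V := by
    rw [conj_sub_half_smul_sum, hX, Matrix.mul_assoc Vᵀ P]
    simp only [hM]
  have hY : (V * (Vᵀ * A * V) * Vᵀ).PosSemidef := by
    simpa [hcayley] using hy.mul_mul_conjTranspose_same V
  have hΩY : Ω * (V * (Vᵀ * A * V) * Vᵀ) = -(1/2 : ℝ) • (Ω * S * (V * Vᵀ)) := calc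
    _ = Ω * (V * Vᵀ) * A * (V * Vᵀ) := by simp only [Matrix.mul_assoc]
    _ = Ω * A * (V * Vᵀ) := by rw [hΩK]
    _ = _ := by
      rw [Matrix.mul_sub, ← Matrix.mul_assoc Ω P, hΩP, Matrix.zero_mul, zero_sub, Matrix.mul_smul,
        Matrix.neg_mul, Matrix.smul_mul, neg_smul]
  have hdiag : ∀ k, (Ω * S) k k = 0 :=
    mul_sum_smul_Eij_apply_self_eq_zero (fun q => hΩmiss _ _ q.2.1.ne q.2.2)
      (fun q => hΩmiss _ _ q.2.1.ne' fun h => q.2.2 h.symm) y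
  have htr : (Ω * (V * (Vᵀ * A * V) * Vᵀ)).trace = 0 := by
    rw [hΩY, trace_smul, trace_mul_comm, ← mul_assoc, hKΩ]
    simp [trace, hdiag]
  have hΩSK : Ω * S * (V * Vᵀ) = 0 := by
    simpa [hΩY] using hΩpsd.mul_eq_zero_of_trace_mul_eq_zero hY htr
  exact eq_zero_of_mul_centering_eq_zero (hK ▸ hΩSK) hdiag

/-- If `Ω` is a nonzero PSD stress matrix of `(G,p)`, then the Cayley configuration
spectrahedron of `(G,p)` is contained in `{y : Ω (Σ_{missing} y_ij E^{ij}) = 0}`. -/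
theorem stmt18 (n r : ℕ) (G : SimpleGraph (Fin n)) [DecidableRel G.Adj]
    (P : Matrix (Fin n) (Fin r) ℝ) (hPe : Pᵀ *ᵥ (fun _ => (1 : ℝ)) = 0)
    (V : Matrix (Fin n) (Fin (n - 1)) ℝ)
    (hVe : Vᵀ *ᵥ (fun _ => (1 : ℝ)) = 0) (hVV : Vᵀ * V = 1)
    (X : Matrix (Fin (n - 1)) (Fin (n - 1)) ℝ) (hX : X = Vᵀ * P * Pᵀ * V)
    (M : {q : Fin n × Fin n // q.1 < q.2 ∧ ¬ G.Adj q.1 q.2} →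
        Matrix (Fin (n - 1)) (Fin (n - 1)) ℝ)
    (hM : ∀ q, M q = (-(1/2) : ℝ) • (Vᵀ * Eij q.1.1 q.1.2 * V))
    (Ω : Matrix (Fin n) (Fin n) ℝ)
    (hΩsym : Ω.IsSymm) (hΩP : Ω * P = 0) (hΩe : Ω *ᵥ (fun _ => (1 : ℝ)) = 0)
    (hΩmiss : ∀ i j, i ≠ j → ¬ G.Adj i j → Ω i j = 0)
    (hΩpsd : Ω.PosSemidef) (hΩne : Ω ≠ 0) :
    {y : {q : Fin n × Fin n // q.1 < q.2 ∧ ¬ G.Adj q.1 q.2} → ℝ |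
        (X + ∑ q, y q • M q).PosSemidef} ⊆
      {y | Ω * (∑ q, y q • Eij q.1.1 q.1.2) = 0} :=
  stmt18_general n r G P V hVe hVV X hX M hM Ω hΩP hΩe hΩmiss hΩpsd
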